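/- arXiv:2112.09274 — 5 statements merged into one kernel-verified Lean document; each statement's English description precedes it below -/
import Mathlib

section
/- Transitivity of algorithmic subtyping (POPLmark Challenge 1A): if Γ ⊢ S <: Q and Γ ⊢ Q <: T are derivable, then Γ ⊢ S <: T is derivable. -/
inductive Ty where
  | var : ℕ → Ty
  | top : Ty
  | arrow : Ty → Ty → Ty
  | all : ℕ → Ty → Ty → Ty

abbrev Env := List (ℕ × Ty)

def freeVars : Ty → Finset ℕ
  | .var x => {x}
  | .top => ∅
  | .arrow a b => freeVars a ∪ freeVars b
  | .all x a b => freeVars a ∪ (freeVars b \ {x})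

def boundVars (Γ : Env) : Finset ℕ := (Γ.map Prod.fst).toFinset

/-- A type is well-scoped in Γ if all its free variables are bound in Γ. -/
def WellScoped (Γ : Env) (t : Ty) : Prop := freeVars t ⊆ boundVars Γ

/-- The original algorithmic subtyping system for F<:. -/
inductive Subty : Env → Ty → Ty → Prop where
  | top {Γ S} : WellScoped Γ S → Subty Γ S .top
  | refl {Γ X} : X ∈ boundVars Γ → Subty Γ (.var X) (.var X)
  | trans_tvar {Γ X U T} : (X, U) ∈ Γ → Subty Γ U T → Subty Γ (.var X) T
  | arrow {Γ S₁ S₂ T₁ T₂} : Subty Γ T₁ S₁ → Subty Γ S₂ T₂ →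
      Subty Γ (.arrow S₁ S₂) (.arrow T₁ T₂)
  | all {Γ X S₁ S₂ T₁ T₂} : Subty Γ T₁ S₁ → Subty ((X, T₁) :: Γ) S₂ T₂ →
      Subty Γ (.all X S₁ S₂) (.all X T₁ T₂)

/-!
Transitivity is proved by induction on the middle type `Q`, and for fixed `Q` by induction on
the derivation of `S <: Q`. In the case `Q = ∀X<:Q₁.Q₂` the premises `S₂ <: Q₂` and `Q₂ <: T₂`
live in the contexts extended by `X <: Q₁` and by `X <: T₁`; since `T₁ <: Q₁`, the first can be
narrowed to `X <: T₁` before composing at the smaller type `Q₂`. Narrowing at `Q₁` needs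
transitivity at `Q₁` only where the narrowed variable is looked up (SA-Trans-TVar), so it is
available from the induction hypothesis.
-/

lemma mem_boundVars {Γ : Env} {x : ℕ} : x ∈ boundVars Γ ↔ ∃ u, (x, u) ∈ Γ := by
  simp [boundVars]

lemma boundVars_cons (x : ℕ) (u : Ty) (Γ : Env) :
    boundVars ((x, u) :: Γ) = insert x (boundVars Γ) := by
  simp [boundVars]

lemma boundVars_mono {Γ Γ' : Env} (h : Γ ⊆ Γ') : boundVars Γ ⊆ boundVars Γ' := fun _ hx =>
  let ⟨u, hu⟩ := mem_boundVars.1 hx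
  mem_boundVars.2 ⟨u, h hu⟩

lemma boundVars_append_cons (Δ Γ : Env) (x : ℕ) (u v : Ty) :
    boundVars (Δ ++ (x, u) :: Γ) = boundVars (Δ ++ (x, v) :: Γ) := by
  simp [boundVars]

lemma WellScoped.sdiff_of_cons {Γ : Env} {x : ℕ} {u t : Ty} (h : WellScoped ((x, u) :: Γ) t) :
    freeVars t \ {x} ⊆ boundVars Γ := by
  intro y hy
  rw [Finset.mem_sdiff, Finset.mem_singleton] at hy
  have hy' := h hy.1
  rw [boundVars_cons, Finset.mem_insert] at hy'
  exact hy'.resolve_left hy.2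

def TransitiveAt (Q : Ty) : Prop :=
  ∀ Γ S T, Subty Γ S Q → Subty Γ Q T → Subty Γ S T

namespace Subty

theorem wellScoped {Γ : Env} {S T : Ty} (h : Subty Γ S T) :
    WellScoped Γ S ∧ WellScoped Γ T := by
  induction h with
  | top hS => exact ⟨hS, by simp [WellScoped, freeVars]⟩
  | refl hX => exact ⟨by simpa [WellScoped, freeVars], by simpa [WellScoped, freeVars]⟩
  | trans_tvar hXU _ ih =>
      exact ⟨by simpa [WellScoped, freeVars] using mem_boundVars.2 ⟨_, hXU⟩, ih.2⟩
  | arrow _ _ ih₁ ih₂ =>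
      exact ⟨Finset.union_subset ih₁.2 ih₂.1, Finset.union_subset ih₁.1 ih₂.2⟩
  | all _ _ ih₁ ih₂ =>
      exact ⟨Finset.union_subset ih₁.2 ih₂.1.sdiff_of_cons,
        Finset.union_subset ih₁.1 ih₂.2.sdiff_of_cons⟩

theorem weaken {Γ Γ' : Env} {S T : Ty} (h : Subty Γ S T) (hΓ : Γ ⊆ Γ') : Subty Γ' S T := by
  induction h generalizing Γ' with
  | top hS => exact top (hS.trans (boundVars_mono hΓ))
  | refl hX => exact refl (boundVars_mono hΓ hX)
  | trans_tvar hXU _ ih => exact trans_tvar (hΓ hXU) (ih hΓ)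
  | arrow _ _ ih₁ ih₂ => exact arrow (ih₁ hΓ) (ih₂ hΓ)
  | all _ _ ih₁ ih₂ => exact all (ih₁ hΓ) (ih₂ (List.cons_subset_cons _ hΓ))

theorem narrow {Δ Γ : Env} {X : ℕ} {P Q M N : Ty} (hQ : TransitiveAt Q)
    (hPQ : Subty Γ P Q) (h : Subty (Δ ++ (X, Q) :: Γ) M N) :
    Subty (Δ ++ (X, P) :: Γ) M N := by
  generalize hE : Δ ++ (X, Q) :: Γ = E at h
  induction h generalizing Δ with
  | top hM => subst hE; exact top (by rwa [WellScoped, boundVars_append_cons _ _ _ _ Q])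
  | refl hY => subst hE; exact refl (by rwa [boundVars_append_cons _ _ _ _ Q])
  | @trans_tvar _ Y U _ hYU _ ih =>
      subst hE
      simp only [List.mem_append, List.mem_cons, Prod.mk.injEq] at hYU
      rcases hYU with hΔ | ⟨rfl, rfl⟩ | hΓ
      · exact trans_tvar (List.mem_append_left _ hΔ) (ih rfl)
      · have hPQ' : Subty (Δ ++ (Y, P) :: Γ) P U := hPQ.weaken fun _ h => by simp [h]
        exact trans_tvar (by simp) (hQ _ _ _ hPQ' (ih rfl))
      · exact trans_tvar (List.mem_append_right _ (List.mem_cons_of_mem _ hΓ)) (ih rfl)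
  | arrow _ _ ih₁ ih₂ => exact arrow (ih₁ hE) (ih₂ hE)
  | all _ _ ih₁ ih₂ => exact all (ih₁ hE) (ih₂ (Δ := _ :: Δ) (by rw [← hE]; rfl))

theorem trans_of_transitiveAt_lt {Γ : Env} {S Q T : Ty}
    (hQ : ∀ Q', sizeOf Q' < sizeOf Q → TransitiveAt Q')
    (h₁ : Subty Γ S Q) (h₂ : Subty Γ Q T) : Subty Γ S T := by
  induction h₁ generalizing T with
  | top hS => cases h₂; exact top hS
  | refl => exact h₂
  | trans_tvar hXU _ ih => exact trans_tvar hXU (ih hQ h₂)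
  | arrow hT₁S₁ hS₂T₂ =>
      cases h₂ with
      | top => exact top (arrow hT₁S₁ hS₂T₂).wellScoped.1
      | arrow hU₁T₁ hT₂U₂ =>
          exact arrow (hQ _ (by simp +arith) _ _ _ hU₁T₁ hT₁S₁)
            (hQ _ (by simp +arith) _ _ _ hS₂T₂ hT₂U₂)
  | @all _ _ _ _ Q₁ Q₂ hQ₁S₁ hS₂Q₂ =>
      cases h₂ with
      | top => exact top (all hQ₁S₁ hS₂Q₂).wellScoped.1
      | all hT₁Q₁ hQ₂T₂ =>
          have hQ₁ : TransitiveAt Q₁ := hQ _ (by simp +arith)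
          have hS₂Q₂' := narrow (Δ := []) hQ₁ hT₁Q₁ hS₂Q₂
          exact all (hQ₁ _ _ _ hT₁Q₁ hQ₁S₁) (hQ _ (by simp +arith) _ _ _ hS₂Q₂' hQ₂T₂)

end Subty

theorem transitiveAt (Q : Ty) : TransitiveAt Q :=
  fun _ _ _ h₁ h₂ => h₁.trans_of_transitiveAt_lt (fun Q' _ => transitiveAt Q') h₂
termination_by sizeOf Q

theorem sub_trans (Γ : Env) (S Q T : Ty)
    (h1 : Subty Γ S Q) (h2 : Subty Γ Q T) : Subty Γ S T :=
  transitiveAt Q Γ S T h1 h2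
end

section
/- In Pientka's modified subtyping system (with the SA-Hyp rule Γ ⊢ X <: T whenever X<:T ∈ Γ, and the SA-Tr-TVar rule deriving Γ ⊢ X <: T from Γ ⊢ X <: U and Γ ⊢ U <: T, in place of SA-Trans-TVar), narrowing can be proved independently of transitivity: if Γ₁, X<:Q, Γ₂ ⊢ M <: N and Γ₁ ⊢ P <: Q are derivable, then Γ₁, X<:P, Γ₂ ⊢ M <: N is derivable, without using transitivity of the full relation. -/
/-- Pientka's modified subtyping system, with SA-Hyp and SA-Tr-TVar
    in place of SA-Trans-TVar. -/
inductive Subty' : Env → Ty → Ty → Prop where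
  | top {Γ S} : WellScoped Γ S → Subty' Γ S .top
  | refl {Γ X} : X ∈ boundVars Γ → Subty' Γ (.var X) (.var X)
  | hyp {Γ X T} : (X, T) ∈ Γ → Subty' Γ (.var X) T
  | tr_tvar {Γ X U T} : Subty' Γ (.var X) U → Subty' Γ U T → Subty' Γ (.var X) T
  | arrow {Γ S₁ S₂ T₁ T₂} : Subty' Γ T₁ S₁ → Subty' Γ S₂ T₂ →
      Subty' Γ (.arrow S₁ S₂) (.arrow T₁ T₂)
  | all {Γ X S₁ S₂ T₁ T₂} : Subty' Γ T₁ S₁ → Subty' ((X, T₁) :: Γ) S₂ T₂ →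
      Subty' Γ (.all X S₁ S₂) (.all X T₁ T₂)

lemma boundVars_append_cons_s8 (Γ₁ Γ₂ : Env) (X : ℕ) (T : Ty) :
    boundVars (Γ₂ ++ (X, T) :: Γ₁) = boundVars Γ₂ ∪ insert X (boundVars Γ₁) := by
  simp [boundVars]

namespace Subty'

theorem weaken {Γ Γ' : Env} {M N : Ty} (h : Subty' Γ M N) (hΓ : Γ ⊆ Γ') :
    Subty' Γ' M N := by
  induction h generalizing Γ' with
  | top hs => exact .top (hs.trans (boundVars_mono hΓ))
  | refl hx => exact .refl (boundVars_mono hΓ hx)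
  | hyp hm => exact .hyp (hΓ hm)
  | tr_tvar _ _ ih₁ ih₂ => exact .tr_tvar (ih₁ hΓ) (ih₂ hΓ)
  | arrow _ _ ih₁ ih₂ => exact .arrow (ih₁ hΓ) (ih₂ hΓ)
  | all _ _ ih₁ ih₂ => exact .all (ih₁ hΓ) (ih₂ (List.cons_subset_cons _ hΓ))

/-- Each SA-Hyp step is replaced by the given derivation of its binding; SA-Tr-TVar only chains
at a type variable, so no transitivity of the full relation is needed. -/
theorem of_bindings {Γ Γ' : Env} {M N : Ty} (h : Subty' Γ M N)
    (hbound : boundVars Γ ⊆ boundVars Γ')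
    (hbind : ∀ Y T, (Y, T) ∈ Γ → Subty' Γ' (.var Y) T) : Subty' Γ' M N := by
  induction h generalizing Γ' with
  | top hs => exact .top (hs.trans hbound)
  | refl hx => exact .refl (hbound hx)
  | hyp hm => exact hbind _ _ hm
  | tr_tvar _ _ ih₁ ih₂ => exact .tr_tvar (ih₁ hbound hbind) (ih₂ hbound hbind)
  | arrow _ _ ih₁ ih₂ => exact .arrow (ih₁ hbound hbind) (ih₂ hbound hbind)
  | @all _ Y _ _ T₁ _ _ _ ih₁ ih₂ =>
    refine .all (ih₁ hbound hbind) (ih₂ ?_ ?_)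
    · simpa only [boundVars, List.map_cons, List.toFinset_cons] using
        Finset.insert_subset_insert Y hbound
    · intro Z U hZU
      rcases List.mem_cons.mp hZU with hhead | htail
      · exact .hyp (hhead ▸ List.mem_cons_self)
      · exact (hbind Z U htail).weaken (List.subset_cons_self _ _)

end Subty'

theorem sub'_narrowing (Γ₁ Γ₂ : Env) (X : ℕ) (P Q M N : Ty)
    (h1 : Subty' (Γ₂ ++ (X, Q) :: Γ₁) M N) (h2 : Subty' Γ₁ P Q) :
    Subty' (Γ₂ ++ (X, P) :: Γ₁) M N := by
  refine h1.of_bindings (by rw [boundVars_append_cons_s8, boundVars_append_cons_s8]) ?_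
  intro Y T hYT
  rcases List.mem_append.mp hYT with hleft | hright
  · exact .hyp (List.mem_append_left _ hleft)
  rcases List.mem_cons.mp hright with hX | hΓ₁
  · obtain ⟨rfl, rfl⟩ := Prod.mk.inj hX
    have hXP : (Y, P) ∈ Γ₂ ++ (Y, P) :: Γ₁ := List.mem_append_right _ List.mem_cons_self
    exact .tr_tvar (.hyp hXP) (h2.weaken (List.subset_append_of_subset_right _
      (List.subset_cons_self _ _)))
  · exact .hyp (List.mem_append_right _ (List.mem_cons_of_mem _ hΓ₁))
end

section
/- Completeness of the modified system: every judgment Γ ⊢ S <: T derivable in the original algorithmic subtyping system is derivable in Pientka's modified system with rules SA-Hyp and SA-Tr-TVar, provided all types bound in Γ are well-scoped with respect to Γ. -/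
lemma ws_cons {Γ : Env} {p : ℕ × Ty} {t : Ty} (h : WellScoped Γ t) :
    WellScoped (p :: Γ) t := by
  intro x hx
  simp only [boundVars, List.map_cons, List.toFinset_cons, Finset.mem_insert]
  exact Or.inr (h hx)

lemma hΓ_cons {Γ : Env} {X : ℕ} {T : Ty}
    (hΓ : ∀ b ∈ Γ, WellScoped Γ b.2) (hT : WellScoped Γ T) :
    ∀ b ∈ ((X, T) :: Γ), WellScoped ((X, T) :: Γ) b.2 := by
  intro b hb
  rcases List.mem_cons.mp hb with hb | hb
  · subst hb; exact ws_cons hT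
  · exact ws_cons (hΓ b hb)

lemma sub_regular {Γ : Env} {S T : Ty} (h : Subty Γ S T) :
    (∀ b ∈ Γ, WellScoped Γ b.2) → WellScoped Γ S ∧ WellScoped Γ T := by
  induction h with
  | top hS => intro _; exact ⟨hS, by intro x hx; simp [freeVars] at hx⟩
  | refl hX => intro _; exact ⟨by simpa [WellScoped, freeVars], by simpa [WellScoped, freeVars]⟩
  | trans_tvar hXU _ ih =>
      intro hΓ
      refine ⟨?_, (ih hΓ).2⟩
      intro x hx
      simp only [freeVars, Finset.mem_singleton] at hx
      subst hx
      simp only [boundVars, List.mem_toFinset, List.mem_map]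
      exact ⟨_, hXU, rfl⟩
  | arrow _ _ ih1 ih2 =>
      intro hΓ
      obtain ⟨h1, h2⟩ := ih1 hΓ
      obtain ⟨h3, h4⟩ := ih2 hΓ
      constructor <;>
      · intro x hx
        simp only [freeVars, Finset.mem_union] at hx
        rcases hx with hx | hx <;>
          first | exact h1 hx | exact h2 hx | exact h3 hx | exact h4 hx
  | @all Γ X S₁ S₂ T₁ T₂ _ _ ih1 ih2 =>
      intro hΓ
      obtain ⟨hT₁, hS₁⟩ := ih1 hΓ
      obtain ⟨hS₂, hT₂⟩ := ih2 (hΓ_cons hΓ hT₁)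
      have key : ∀ t, WellScoped ((X, T₁) :: Γ) t →
          (freeVars t \ {X} : Finset ℕ) ⊆ boundVars Γ := by
        intro t ht x hx
        simp only [Finset.mem_sdiff, Finset.mem_singleton] at hx
        have := ht hx.1
        simp only [boundVars, List.map_cons, List.toFinset_cons, Finset.mem_insert] at this
        rcases this with h | h
        · exact absurd h hx.2
        · exact h
      constructor <;>
      · intro x hx
        simp only [freeVars, Finset.mem_union] at hx
        rcases hx with hx | hx
        · first | exact hS₁ hx | exact hT₁ hx
        · first | exact key _ hS₂ hx | exact key _ hT₂ hx

theorem sub'_complete (Γ : Env) (S T : Ty)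
    (hΓ : ∀ b ∈ Γ, WellScoped Γ b.2)
    (h : Subty Γ S T) : Subty' Γ S T := by
  revert hΓ
  induction h with
  | top hS => exact fun _ => Subty'.top hS
  | refl hX => exact fun _ => Subty'.refl hX
  | trans_tvar hXU _ ih =>
      exact fun hΓ => Subty'.tr_tvar (Subty'.hyp hXU) (ih hΓ)
  | arrow _ _ ih1 ih2 => exact fun hΓ => Subty'.arrow (ih1 hΓ) (ih2 hΓ)
  | all h1 _ ih1 ih2 =>
      exact fun hΓ =>
        Subty'.all (ih1 hΓ) (ih2 (hΓ_cons hΓ (sub_regular h1 hΓ).1))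
end

section
/- Admissibility of the contraction-like substitution rule: in Pientka's modified subtyping system, if Γ₁, X<:U, Γ₂ ⊢ X <: V and Γ₁, X<:V, Γ₂ ⊢ M <: N are derivable, then Γ₁, X<:U, Γ₂ ⊢ M <: N is derivable. -/
lemma boundVars_subset_of_mem {Γ Γ' : Env} (h : ∀ p ∈ Γ, p ∈ Γ') :
    boundVars Γ ⊆ boundVars Γ' := by
  intro x hx
  simp only [boundVars, List.mem_toFinset, List.mem_map] at hx ⊢
  obtain ⟨p, hp, rfl⟩ := hx
  exact ⟨p, h p hp, rfl⟩

lemma Subty'.weaken_s12 {Γ Γ' : Env} {S T : Ty} (h : Subty' Γ S T)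
    (hsub : ∀ p ∈ Γ, p ∈ Γ') : Subty' Γ' S T := by
  induction h generalizing Γ' with
  | top hws => exact .top (hws.trans (boundVars_subset_of_mem hsub))
  | refl hx => exact .refl (boundVars_subset_of_mem hsub hx)
  | hyp hm => exact .hyp (hsub _ hm)
  | tr_tvar _ _ ih1 ih2 => exact .tr_tvar (ih1 hsub) (ih2 hsub)
  | arrow _ _ ih1 ih2 => exact .arrow (ih1 hsub) (ih2 hsub)
  | all _ _ ih1 ih2 =>
      refine .all (ih1 hsub) (ih2 ?_)
      intro p hp
      rcases List.mem_cons.1 hp with h | h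
      · exact List.mem_cons.2 (Or.inl h)
      · exact List.mem_cons.2 (Or.inr (hsub _ h))

lemma boundVars_mid (Γ₁ Γ₂ : Env) (X : ℕ) (U V : Ty) :
    boundVars (Γ₂ ++ (X, V) :: Γ₁) = boundVars (Γ₂ ++ (X, U) :: Γ₁) := by
  simp [boundVars]

lemma sub'_subst_aux {E : Env} {M N : Ty} (h : Subty' E M N) :
    ∀ Γ₁ Γ₂ : Env, ∀ X : ℕ, ∀ U V : Ty, E = Γ₂ ++ (X, V) :: Γ₁ →
    Subty' (Γ₂ ++ (X, U) :: Γ₁) (.var X) V →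
    Subty' (Γ₂ ++ (X, U) :: Γ₁) M N := by
  induction h with
  | @top Γ S hws =>
      rintro Γ₁ Γ₂ X U V rfl h1
      exact .top (by rwa [WellScoped, ← boundVars_mid Γ₁ Γ₂ X U V])
  | @refl Γ Y hx =>
      rintro Γ₁ Γ₂ X U V rfl h1
      exact .refl (by rwa [← boundVars_mid Γ₁ Γ₂ X U V])
  | @hyp Γ Y T hm =>
      rintro Γ₁ Γ₂ X U V rfl h1
      rcases List.mem_append.1 hm with h | h
      · exact .hyp (List.mem_append.2 (Or.inl h))
      · rcases List.mem_cons.1 h with h | h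
        · obtain ⟨rfl, rfl⟩ := Prod.mk.injEq .. ▸ h
          exact h1
        · exact .hyp (List.mem_append.2 (Or.inr (List.mem_cons.2 (Or.inr h))))
  | tr_tvar _ _ ih1 ih2 =>
      rintro Γ₁ Γ₂ X U V rfl h1
      exact .tr_tvar (ih1 _ _ _ _ _ rfl h1) (ih2 _ _ _ _ _ rfl h1)
  | arrow _ _ ih1 ih2 =>
      rintro Γ₁ Γ₂ X U V rfl h1
      exact .arrow (ih1 _ _ _ _ _ rfl h1) (ih2 _ _ _ _ _ rfl h1)
  | @all Γ Y S₁ S₂ T₁ T₂ _ _ ih1 ih2 =>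
      rintro Γ₁ Γ₂ X U V rfl h1
      refine .all (ih1 _ _ _ _ _ rfl h1) ?_
      have h1' : Subty' ((Y, T₁) :: Γ₂ ++ (X, U) :: Γ₁) (.var X) V :=
        h1.weaken_s12 (fun p hp => List.mem_cons.2 (Or.inr hp))
      exact ih2 Γ₁ ((Y, T₁) :: Γ₂) X U V rfl h1'

theorem sub'_subst_admissible (Γ₁ Γ₂ : Env) (X : ℕ) (U V M N : Ty)
    (h1 : Subty' (Γ₂ ++ (X, U) :: Γ₁) (.var X) V)
    (h2 : Subty' (Γ₂ ++ (X, V) :: Γ₁) M N) :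
    Subty' (Γ₂ ++ (X, U) :: Γ₁) M N := by
  exact sub'_subst_aux h2 Γ₁ Γ₂ X U V rfl h1
end

section
/- Narrowing follows for free from the extra rule: in any subtyping system containing the rule SA-Tr-TVar and closed under the rule 'from Γ₁,X<:U,Γ₂ ⊢ X <: V and Γ₁,X<:V,Γ₂ ⊢ M <: N infer Γ₁,X<:U,Γ₂ ⊢ M <: N' and containing SA-Hyp, the narrowing property holds: if Γ₁, X<:Q, Γ₂ ⊢ M <: N and Γ₁ ⊢ P <: Q (with weakening available), then Γ₁, X<:P, Γ₂ ⊢ M <: N. -/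
theorem narrowing_for_free
    (R : Env → Ty → Ty → Prop)
    (hHyp : ∀ Γ X T, (X, T) ∈ Γ → R Γ (.var X) T)
    (hTr : ∀ Γ X U T, R Γ (.var X) U → R Γ U T → R Γ (.var X) T)
    (hWeak : ∀ Γ Γ' S T, R Γ S T → (∀ b ∈ Γ, b ∈ Γ') → R Γ' S T)
    (hSubst : ∀ Γ₁ Γ₂ X U V M N,
      R (Γ₂ ++ (X, U) :: Γ₁) (.var X) V →
      R (Γ₂ ++ (X, V) :: Γ₁) M N →
      R (Γ₂ ++ (X, U) :: Γ₁) M N)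
    (Γ₁ Γ₂ : Env) (X : ℕ) (P Q M N : Ty)
    (h1 : R (Γ₂ ++ (X, Q) :: Γ₁) M N) (h2 : R Γ₁ P Q) :
    R (Γ₂ ++ (X, P) :: Γ₁) M N := by
  apply hSubst Γ₁ Γ₂ X P Q M N _ h1
  apply hTr _ _ P
  · exact hHyp _ _ _ (by simp)
  · exact hWeak _ _ _ _ h2 (by intro b hb; simp [hb])
end
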